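/- For normal distributions F = N(μ_F, σ_F²), G = N(μ_G, σ_G²) with σ_F ≠ σ_G, the AVM satisfies AVM(F,G) = μ̃(2Φ(μ̃/σ̃) − 1) + 2σ̃φ(μ̃/σ̃), where μ̃ = |μ_F − μ_G| and σ̃ = |σ_F − σ_G|; and if σ_F = σ_G, then AVM(F,G) = μ̃. -/

import Mathlib

open MeasureTheory intervalIntegral

/-- Standard normal density. -/
noncomputable def stdPdf (x : ℝ) : ℝ :=
  (Real.sqrt (2 * Real.pi))⁻¹ * Real.exp (-(x ^ 2) / 2)

/-- Standard normal distribution function. -/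
noncomputable def stdCdf (x : ℝ) : ℝ := ∫ t in Set.Iic x, stdPdf t

/-- Standard normal quantile function. -/
noncomputable def stdQuantile (τ : ℝ) : ℝ := sInf {x | τ ≤ stdCdf x}

/-!
Substituting `τ = Φ x` (so that `Φ⁻¹ τ = x` and `dτ = φ x dx`) turns the integral over quantile
levels into the Gaussian mean absolute value `∫ |Δμ + Δσ x| φ(x) dx`. By the symmetry of `φ` the
signs of `Δμ` and `Δσ` may be dropped; splitting the line at the root `-m/s` of `m + s x` and using
`(-φ)' = x φ` gives the closed form.
-/

open Set Filter Topology ProbabilityTheory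

lemma stdPdf_eq_gaussianPDFReal : stdPdf = gaussianPDFReal 0 1 := by
  ext x; simp [stdPdf, gaussianPDFReal]

lemma stdPdf_pos (x : ℝ) : 0 < stdPdf x := by
  rw [stdPdf_eq_gaussianPDFReal]; exact gaussianPDFReal_pos 0 1 x one_ne_zero

lemma stdPdf_neg (x : ℝ) : stdPdf (-x) = stdPdf x := by simp [stdPdf]

lemma continuous_stdPdf : Continuous stdPdf := by unfold stdPdf; fun_prop

lemma integrable_stdPdf : Integrable stdPdf := by
  rw [stdPdf_eq_gaussianPDFReal]; exact integrable_gaussianPDFReal 0 1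

lemma integrable_mul_stdPdf : Integrable fun x => x * stdPdf x := by
  have := (integrable_mul_exp_neg_mul_sq (by norm_num : (0:ℝ) < 1/2)).const_mul
    (Real.sqrt (2 * Real.pi))⁻¹
  refine this.congr (ae_of_all _ fun x => ?_)
  simp only [stdPdf]; ring_nf

lemma hasDerivAt_neg_stdPdf (x : ℝ) : HasDerivAt (fun y => -stdPdf y) (x * stdPdf x) x := by
  have hexp : HasDerivAt (fun y : ℝ => Real.exp (-(y ^ 2) / 2)) (Real.exp (-(x ^ 2) / 2) * -x) x :=
    (((hasDerivAt_pow 2 x).neg.div_const 2).congr_deriv (by ring)).exp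
  have hpdf : HasDerivAt stdPdf (-(x * stdPdf x)) x :=
    (hexp.const_mul (Real.sqrt (2 * Real.pi))⁻¹).congr_deriv (by rw [stdPdf]; ring)
  exact hpdf.neg.congr_deriv (neg_neg _)

lemma tendsto_stdPdf_cocompact : Tendsto stdPdf (cocompact ℝ) (𝓝 0) := by
  have := (tendsto_rpow_abs_mul_exp_neg_mul_sq_cocompact (by norm_num : (0:ℝ) < 1/2) 0).const_mul
    (Real.sqrt (2 * Real.pi))⁻¹
  rw [mul_zero] at this
  refine this.congr fun x => ?_
  simp only [stdPdf, Real.rpow_zero, one_mul]; ring_nf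

lemma integral_Ioi_mul_stdPdf (t : ℝ) : ∫ x in Ioi t, x * stdPdf x = stdPdf t := by
  have := integral_Ioi_of_hasDerivAt_of_tendsto' (a := t) (fun x _ => hasDerivAt_neg_stdPdf x)
    integrable_mul_stdPdf.integrableOn (tendsto_stdPdf_cocompact.mono_left atTop_le_cocompact).neg
  simpa using this

lemma integral_Iic_mul_stdPdf (t : ℝ) : ∫ x in Iic t, x * stdPdf x = -stdPdf t := by
  have := integral_Iic_of_hasDerivAt_of_tendsto' (a := t) (fun x _ => hasDerivAt_neg_stdPdf x)
    integrable_mul_stdPdf.integrableOn (tendsto_stdPdf_cocompact.mono_left atBot_le_cocompact).neg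
  simpa using this

lemma stdCdf_eq_cdf : stdCdf = cdf (gaussianReal 0 1) := by
  ext x
  rw [cdf_eq_real, measureReal_def, gaussianReal_apply_eq_integral 0 one_ne_zero,
    ENNReal.toReal_ofReal (integral_nonneg fun t => gaussianPDFReal_nonneg 0 1 t),
    stdCdf, stdPdf_eq_gaussianPDFReal]

lemma integral_stdPdf : ∫ x, stdPdf x = 1 := by
  rw [stdPdf_eq_gaussianPDFReal, integral_gaussianPDFReal_eq_one 0 one_ne_zero]

lemma integral_Ioi_stdPdf (t : ℝ) : ∫ x in Ioi t, stdPdf x = 1 - stdCdf t := by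
  rw [← integral_stdPdf, ← integral_Iic_add_Ioi integrable_stdPdf.integrableOn
    integrable_stdPdf.integrableOn (b := t), stdCdf]
  ring

lemma stdCdf_neg (x : ℝ) : stdCdf (-x) = 1 - stdCdf x := by
  rw [← integral_Ioi_stdPdf, stdCdf, ← integral_comp_neg_Ioi]
  simp only [stdPdf_neg]

lemma hasDerivAt_stdCdf (x : ℝ) : HasDerivAt stdCdf (stdPdf x) x := by
  have hFTC : stdCdf = fun y => stdCdf 0 + ∫ t in (0:ℝ)..y, stdPdf t := by
    ext y
    rw [stdCdf, stdCdf, ← integral_Iic_sub_Iic integrable_stdPdf.integrableOn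
      integrable_stdPdf.integrableOn]
    ring
  rw [hFTC]
  exact (integral_hasDerivAt_right integrable_stdPdf.intervalIntegrable
    (continuous_stdPdf.stronglyMeasurableAtFilter _ _) continuous_stdPdf.continuousAt).const_add _

lemma stdCdf_strictMono : StrictMono stdCdf :=
  strictMono_of_hasDerivAt_pos hasDerivAt_stdCdf stdPdf_pos

lemma range_stdCdf : range stdCdf = Ioo 0 1 := by
  have hcont : Continuous stdCdf := continuous_iff_continuousAt.2 fun x =>
    (hasDerivAt_stdCdf x).continuousAt
  have hbot : Tendsto stdCdf atBot (𝓝 0) := stdCdf_eq_cdf ▸ tendsto_cdf_atBot _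
  have htop : Tendsto stdCdf atTop (𝓝 1) := stdCdf_eq_cdf ▸ tendsto_cdf_atTop _
  refine Subset.antisymm ?_ fun τ hτ => ?_
  · rintro _ ⟨x, rfl⟩
    exact ⟨(stdCdf_strictMono.monotone.le_of_tendsto hbot (x - 1)).trans_lt
      (stdCdf_strictMono (sub_one_lt x)), (stdCdf_strictMono (lt_add_one x)).trans_le
      (stdCdf_strictMono.monotone.ge_of_tendsto htop (x + 1))⟩
  · exact mem_range_of_exists_le_of_exists_ge hcont
      ((hbot.eventually (gt_mem_nhds hτ.1)).exists.imp fun _ => le_of_lt)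
      ((htop.eventually (lt_mem_nhds hτ.2)).exists.imp fun _ => le_of_lt)

lemma stdQuantile_stdCdf (x : ℝ) : stdQuantile (stdCdf x) = x := by
  simp only [stdQuantile, stdCdf_strictMono.le_iff_le]
  exact csInf_Ici

theorem integral_stdQuantile (g : ℝ → ℝ) :
    ∫ τ in (0:ℝ)..1, g (stdQuantile τ) = ∫ x, g x * stdPdf x := by
  rw [integral_of_le zero_le_one, integral_Ioc_eq_integral_Ioo, ← range_stdCdf, ← image_univ,
    integral_image_eq_integral_abs_deriv_smul MeasurableSet.univ
      (fun x _ => (hasDerivAt_stdCdf x).hasDerivWithinAt) stdCdf_strictMono.injective.injOn,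
    setIntegral_univ]
  simp only [stdQuantile_stdCdf, abs_of_pos (stdPdf_pos _), smul_eq_mul, mul_comm]

lemma integrable_affine_mul_stdPdf (m s : ℝ) : Integrable fun x => (m + s * x) * stdPdf x := by
  simp_rw [add_mul, mul_assoc]
  exact (integrable_stdPdf.const_mul m).add (integrable_mul_stdPdf.const_mul s)

lemma integral_Iic_affine_mul_stdPdf (m s t : ℝ) :
    ∫ x in Iic t, (m + s * x) * stdPdf x = m * stdCdf t - s * stdPdf t := by
  simp_rw [add_mul, mul_assoc]
  rw [integral_add (integrable_stdPdf.const_mul m).integrableOn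
    (integrable_mul_stdPdf.const_mul s).integrableOn, MeasureTheory.integral_const_mul,
    MeasureTheory.integral_const_mul, integral_Iic_mul_stdPdf, stdCdf]
  ring

lemma integral_Ioi_affine_mul_stdPdf (m s t : ℝ) :
    ∫ x in Ioi t, (m + s * x) * stdPdf x = m * (1 - stdCdf t) + s * stdPdf t := by
  simp_rw [add_mul, mul_assoc]
  rw [integral_add (integrable_stdPdf.const_mul m).integrableOn
    (integrable_mul_stdPdf.const_mul s).integrableOn, MeasureTheory.integral_const_mul,
    MeasureTheory.integral_const_mul, integral_Ioi_mul_stdPdf, integral_Ioi_stdPdf]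

lemma integral_abs_affine_mul_stdPdf_of_pos (m : ℝ) {s : ℝ} (hs : 0 < s) :
    ∫ x, |m + s * x| * stdPdf x = m * (2 * stdCdf (m / s) - 1) + 2 * s * stdPdf (m / s) := by
  set c := m / s
  have hsc : s * c = m := mul_div_cancel₀ m hs.ne'
  have hint : Integrable fun x => |m + s * x| * stdPdf x := by
    refine (integrable_affine_mul_stdPdf m s).abs.congr (ae_of_all _ fun x => ?_)
    simp only [abs_mul, abs_of_pos (stdPdf_pos x)]
  have hIic :
      ∫ x in Iic (-c), |m + s * x| * stdPdf x = -(m * stdCdf (-c) - s * stdPdf (-c)) := by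
    rw [← integral_Iic_affine_mul_stdPdf, ← MeasureTheory.integral_neg]
    refine setIntegral_congr_fun measurableSet_Iic fun x (hx : x ≤ -c) => ?_
    rw [abs_of_nonpos (by nlinarith [mul_le_mul_of_nonneg_left hx hs.le]), neg_mul]
  have hIoi :
      ∫ x in Ioi (-c), |m + s * x| * stdPdf x = m * (1 - stdCdf (-c)) + s * stdPdf (-c) := by
    rw [← integral_Ioi_affine_mul_stdPdf]
    refine setIntegral_congr_fun measurableSet_Ioi fun x (hx : -c < x) => ?_
    rw [abs_of_nonneg (by nlinarith [mul_le_mul_of_nonneg_left hx.le hs.le])]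
  rw [← integral_Iic_add_Ioi hint.integrableOn hint.integrableOn, hIic, hIoi, stdCdf_neg,
    stdPdf_neg]
  ring

lemma integral_abs_affine_mul_stdPdf_eq_abs (a b : ℝ) :
    ∫ x, |a + b * x| * stdPdf x = ∫ x, |(|a|) + |b| * x| * stdPdf x := by
  have hreflect (c d : ℝ) : ∫ x, |c + d * x| * stdPdf x = ∫ x, |c - d * x| * stdPdf x := by
    rw [← integral_neg_eq_self]
    simp only [stdPdf_neg, mul_neg, ← sub_eq_add_neg]
  have hnegate (c d : ℝ) : ∫ x, |c + d * x| * stdPdf x = ∫ x, |-c - d * x| * stdPdf x := by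
    simp only [← neg_add', abs_neg]
  rcases abs_choice a with ha | ha <;> rcases abs_choice b with hb | hb <;> rw [ha, hb]
  · simp only [neg_mul, ← sub_eq_add_neg]
    exact hreflect a b
  · rw [hnegate, ← hreflect]
  · rw [hnegate]
    simp only [neg_mul, ← sub_eq_add_neg]

theorem integral_abs_affine_mul_stdPdf (a : ℝ) {b : ℝ} (hb : b ≠ 0) :
    ∫ x, |a + b * x| * stdPdf x =
      |a| * (2 * stdCdf (|a| / |b|) - 1) + 2 * |b| * stdPdf (|a| / |b|) := by
  rw [integral_abs_affine_mul_stdPdf_eq_abs,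
    integral_abs_affine_mul_stdPdf_of_pos |a| (abs_pos.2 hb)]

theorem avm_normal_general (μF μG σF σG : ℝ) :
    (σF ≠ σG →
      (∫ τ in (0:ℝ)..1,
        |(μF + σF * stdQuantile τ) - (μG + σG * stdQuantile τ)|) =
        |μF - μG| * (2 * stdCdf (|μF - μG| / |σF - σG|) - 1) +
          2 * |σF - σG| * stdPdf (|μF - μG| / |σF - σG|)) ∧
    (σF = σG →
      (∫ τ in (0:ℝ)..1,
        |(μF + σF * stdQuantile τ) - (μG + σG * stdQuantile τ)|) =
        |μF - μG|) := by
  refine ⟨fun hne => ?_, fun heq => ?_⟩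
  · simp_rw [add_sub_add_comm, ← sub_mul]
    rw [integral_stdQuantile (fun x => |(μF - μG) + (σF - σG) * x|),
      integral_abs_affine_mul_stdPdf _ (sub_ne_zero.2 hne)]
  · simp [heq]

/-- Closed form of the AVM between two normal distributions, with quantile
functions `F⁻¹(τ) = μ_F + σ_F Φ⁻¹(τ)` and `G⁻¹(τ) = μ_G + σ_G Φ⁻¹(τ)`. -/
theorem avm_normal (μF μG σF σG : ℝ) (hσF : 0 < σF) (hσG : 0 < σG) :
    (σF ≠ σG →
      (∫ τ in (0:ℝ)..1,
        |(μF + σF * stdQuantile τ) - (μG + σG * stdQuantile τ)|) =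
        |μF - μG| * (2 * stdCdf (|μF - μG| / |σF - σG|) - 1) +
          2 * |σF - σG| * stdPdf (|μF - μG| / |σF - σG|)) ∧
    (σF = σG →
      (∫ τ in (0:ℝ)..1,
        |(μF + σF * stdQuantile τ) - (μG + σG * stdQuantile τ)|) =
        |μF - μG|) :=
  avm_normal_general μF μG σF σG
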